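/- Let h: ℝ → ℝ be twice continuously differentiable with ḧ(t) ≤ -a_max for all t, where a_max > 0. Define H(t) = h(t) + |ḣ(t)| ḣ(t) / (2 a_max). If H(t₀) ≤ 0 and h(t₀) ≤ 0, then h(t) ≤ 0 for all t ≥ t₀. -/

import Mathlib

theorem stmt_9 (h : ℝ → ℝ) (a_max : ℝ) (ha : 0 < a_max)
    (hsmooth : ContDiff ℝ 2 h)
    (hacc : ∀ t : ℝ, deriv (deriv h) t ≤ -a_max)
    (H : ℝ → ℝ)
    (hH : ∀ t, H t = h t + |deriv h t| * deriv h t / (2 * a_max))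
    (t₀ : ℝ) (hH0 : H t₀ ≤ 0) (hh0 : h t₀ ≤ 0) :
    ∀ t ≥ t₀, h t ≤ 0 := by
  have h2 : ContDiff ℝ ((1:ℕ∞)+1) h := by exact_mod_cast hsmooth
  have hd : Differentiable ℝ h := hsmooth.differentiable (by norm_num)
  have hd1 : ContDiff ℝ 1 (deriv h) := (contDiff_succ_iff_deriv.mp h2).2.2
  have hdv : Differentiable ℝ (deriv h) := hd1.differentiable one_ne_zero
  set v := deriv h with hv
  -- Step 1: φ(t) = v t + a_max * (t - t₀) is antitone
  have hφd : Differentiable ℝ (fun t => v t + a_max * (t - t₀)) := by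
    exact hdv.add ((differentiable_id.sub_const t₀).const_mul a_max)
  have hφanti : Antitone (fun t => v t + a_max * (t - t₀)) := by
    apply antitone_of_deriv_nonpos hφd
    intro x
    have e1 : HasDerivAt (fun t : ℝ => a_max * (t - t₀)) (a_max * 1) x :=
      ((hasDerivAt_id x).sub_const t₀).const_mul a_max
    have e2 : HasDerivAt (fun t => v t + a_max * (t - t₀)) (deriv v x + a_max * 1) x :=
      (hdv x).hasDerivAt.add e1
    rw [e2.deriv]
    have := hacc x
    linarith
  have hstep1 : ∀ t ≥ t₀, v t + a_max * (t - t₀) ≤ v t₀ := by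
    intro t ht
    have := hφanti ht
    simpa using this
  -- Step 2: ψ antitone on Ici t₀
  set ψ : ℝ → ℝ := fun t => h t - v t₀ * (t - t₀) + a_max * (t - t₀)^2 / 2 with hψ
  have hψd : Differentiable ℝ ψ := by
    apply Differentiable.add
    · exact hd.sub ((differentiable_id.sub_const t₀).const_mul (v t₀))
    · exact (((differentiable_id.sub_const t₀).pow 2).const_mul a_max).div_const 2
  have hψderiv : ∀ x, deriv ψ x = v x - v t₀ + a_max * (x - t₀) := by
    intro x
    have e1 : HasDerivAt (fun t : ℝ => t - t₀) 1 x := (hasDerivAt_id x).sub_const t₀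
    have e2 : HasDerivAt (fun t : ℝ => v t₀ * (t - t₀)) (v t₀) x := by
      simpa using e1.const_mul (v t₀)
    have e3 : HasDerivAt (fun t : ℝ => a_max * (t - t₀)^2 / 2)
        (a_max * (2 * (x - t₀)) / 2) x := by
      have := (e1.pow 2).const_mul a_max
      simpa [mul_comm, mul_assoc] using this.div_const 2
    have e4 : HasDerivAt h (v x) x := (hd x).hasDerivAt
    have : HasDerivAt ψ (v x - v t₀ + a_max * (2 * (x - t₀)) / 2) x := ((e4.sub e2).add e3)
    rw [this.deriv]
    ring
  have hψanti : AntitoneOn ψ (Set.Ici t₀) := by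
    apply antitoneOn_of_deriv_nonpos (convex_Ici t₀) hψd.continuous.continuousOn
      (hψd.differentiableOn)
    intro x hx
    rw [interior_Ici] at hx
    rw [hψderiv x]
    have := hstep1 x (le_of_lt hx)
    linarith
  intro t ht
  have hψle : ψ t ≤ ψ t₀ := hψanti (Set.self_mem_Ici) ht ht
  have hψ0 : ψ t₀ = h t₀ := by simp [hψ]
  have key : h t ≤ h t₀ + v t₀ * (t - t₀) - a_max * (t - t₀)^2 / 2 := by
    have := hψle
    rw [hψ0] at this
    simp only [hψ] at this
    linarith
  set s := t - t₀ with hs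
  have hs0 : 0 ≤ s := by simp [hs]; linarith
  rcases le_or_gt (v t₀) 0 with hv0 | hv0
  · have : v t₀ * s ≤ 0 := mul_nonpos_of_nonpos_of_nonneg hv0 hs0
    nlinarith [sq_nonneg s]
  · have habs : |v t₀| = v t₀ := abs_of_pos hv0
    have hHt : h t₀ + v t₀ * v t₀ / (2 * a_max) ≤ 0 := by
      have := hH t₀
      rw [habs] at this
      linarith [hH0, this.symm.le, this.le]
    have hq : v t₀ * s - a_max * s^2 / 2 ≤ v t₀ * v t₀ / (2 * a_max) := by
      rw [le_div_iff₀ (by linarith : (0:ℝ) < 2 * a_max)]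
      clear_value s
      nlinarith [sq_nonneg (a_max * s - v t₀)]
    linarith
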